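/- arXiv:1707.01200 — 2 statements merged into one kernel-verified Lean document; each statement's English description precedes it below -/
import Mathlib

section
/- The number of standard Young tableaux of shape (n-k,k) (two rows of lengths n-k ≥ k) equals C(n,k)·(n-2k+1)/(n-k+1), where C(n,k) is the binomial coefficient. -/
open Finset Polynomial
open scoped Classical

/-- A standard Young tableau of two-rowed shape `(n-b, b)` is encoded by the set `S`
of entries of its second row: `S ⊆ {1,…,n}`, `|S| = b`, and for every `m` at most
half of `{1,…,m}` lies in `S` (the ballot condition, which makes columns increase). -/
noncomputable def sytSet (n b : ℕ) : Finset (Finset ℕ) :=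
  (Finset.Icc 1 n).powerset.filter
    (fun S => S.card = b ∧ ∀ m ∈ Finset.Icc 1 n, 2 * (S ∩ Finset.Icc 1 m).card ≤ m)

/-- The descent set of a two-rowed SYT with second row `S`: those `i` with `i+1`
in the second row and `i` in the first row (i.e. `i+1` strictly lower than `i`). -/
def tabDes (n : ℕ) (S : Finset ℕ) : Finset ℕ :=
  (Finset.Icc 1 n).filter (fun i => i + 1 ∈ S ∧ i ∉ S)

/-- The major index of a two-rowed SYT: the sum of its descents. -/
def tabMaj (n : ℕ) (S : Finset ℕ) : ℕ := (tabDes n S).sum id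

/-- `sytMajGF a b i` is the generating function `∑ q^{maj T}` over standard Young
tableaux `T` of shape `(a, b)` with exactly `i` descents. -/
noncomputable def sytMajGF (a b i : ℕ) : Polynomial ℚ :=
  (((sytSet (a + b) b).filter (fun S => (tabDes (a + b) S).card = i)).sum
    (fun S => Polynomial.X ^ (tabMaj (a + b) S)))

/-
Let `f(n, k)` count the tableaux of shape `(n-k, k)`. Removing the largest entry `n + 1`, which
ends either the first or the second row, gives `f(n+1, k+1) = f(n, k+1) + f(n, k)` whenever
`2(k+1) ≤ n+1`, while `f(n, k) = 0` once `2k > n`. The ballot numbers `C(n, k) - C(n, k-1)` obey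
the same recursion and boundary values (the boundary by `C(2k+1, k+1) = C(2k+1, k)`), and
`(C(n, k) - C(n, k-1)) (n - k + 1) = C(n, k) (n - 2k + 1)` because
`C(n, k) k = C(n, k-1) (n - k + 1)`.
-/

lemma mem_sytSet {n b : ℕ} {S : Finset ℕ} :
    S ∈ sytSet n b ↔ S ⊆ Icc 1 n ∧ #S = b ∧ ∀ m ∈ Icc 1 n, 2 * #(S ∩ Icc 1 m) ≤ m := by
  simp [sytSet]

lemma sytSet_zero_right (n : ℕ) : sytSet n 0 = {∅} := by
  ext S
  simp only [mem_sytSet, card_eq_zero, mem_singleton]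
  exact ⟨fun h => h.2.1, by rintro rfl; simp⟩

lemma sytSet_eq_empty_of_lt {n b : ℕ} (h : n < 2 * b) : sytSet n b = ∅ := by
  refine eq_empty_of_forall_notMem fun S hS => ?_
  obtain ⟨hsub, hcard, hballot⟩ := mem_sytSet.1 hS
  rcases Nat.eq_zero_or_pos n with rfl | hn
  · simp_all
  · have := hballot n (mem_Icc.2 ⟨hn, le_rfl⟩)
    rw [inter_eq_left.2 hsub] at this
    omega

lemma succ_notMem_of_mem_sytSet {S : Finset ℕ} {n b : ℕ} (hS : S ∈ sytSet n b) : n + 1 ∉ S :=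
  fun h => by simpa using (mem_sytSet.1 hS).1 h

lemma inter_Icc_insert_of_le {S : Finset ℕ} {n m : ℕ} (hm : m ≤ n) :
    insert (n + 1) S ∩ Icc 1 m = S ∩ Icc 1 m :=
  insert_inter_of_notMem (by simp; omega)

lemma subset_Icc_succ_iff {S : Finset ℕ} {n : ℕ} (hS : n + 1 ∉ S) :
    S ⊆ Icc 1 (n + 1) ↔ S ⊆ Icc 1 n := by
  refine ⟨fun h x hx => ?_, fun h => h.trans (Icc_subset_Icc_right n.le_succ)⟩
  have := mem_Icc.1 (h hx)
  have : x ≠ n + 1 := by rintro rfl; exact hS hx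
  exact mem_Icc.2 (by omega)

lemma mem_sytSet_succ_iff {S : Finset ℕ} {n b : ℕ} (hS : n + 1 ∉ S) (hb : 2 * b ≤ n + 1) :
    S ∈ sytSet (n + 1) b ↔ S ∈ sytSet n b := by
  simp only [mem_sytSet, subset_Icc_succ_iff hS]
  refine and_congr_right fun hsub => and_congr_right fun hcard => ?_
  refine ⟨fun h m hm => h m (Icc_subset_Icc_right n.le_succ hm), fun h m hm => ?_⟩
  rcases (mem_Icc.1 hm).2.lt_or_eq with hlt | rfl
  · exact h m (mem_Icc.2 ⟨(mem_Icc.1 hm).1, by omega⟩)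
  · rwa [inter_eq_left.2 (hsub.trans (Icc_subset_Icc_right n.le_succ)), hcard]

lemma insert_mem_sytSet_succ_iff {S : Finset ℕ} {n b : ℕ} (hS : n + 1 ∉ S)
    (hb : 2 * (b + 1) ≤ n + 1) :
    insert (n + 1) S ∈ sytSet (n + 1) (b + 1) ↔ S ∈ sytSet n b := by
  simp only [mem_sytSet, insert_subset_iff, card_insert_of_notMem hS, subset_Icc_succ_iff hS,
    Nat.add_right_cancel_iff, mem_Icc, le_refl, true_and, and_true, le_add_iff_nonneg_left,
    zero_le]
  refine and_congr_right fun hsub => and_congr_right fun hcard => ?_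
  refine ⟨fun h m hm => ?_, fun h m hm => ?_⟩
  · rw [← inter_Icc_insert_of_le hm.2]
    exact h m ⟨hm.1, by omega⟩
  · rcases hm.2.lt_or_eq with hlt | rfl
    · rw [inter_Icc_insert_of_le (by omega)]
      exact h m ⟨hm.1, by omega⟩
    · rw [inter_eq_left.2 (insert_subset (by simp) (hsub.trans (Icc_subset_Icc_right n.le_succ))),
        card_insert_of_notMem hS, hcard]
      omega

lemma filter_notMem_sytSet_succ {n b : ℕ} (hb : 2 * b ≤ n + 1) :
    (sytSet (n + 1) b).filter (n + 1 ∉ ·) = sytSet n b := by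
  ext S
  by_cases hS : n + 1 ∈ S
  · simpa [hS] using fun h => succ_notMem_of_mem_sytSet h hS
  · simp [hS, mem_sytSet_succ_iff hS hb]

lemma filter_mem_sytSet_succ {n b : ℕ} (hb : 2 * (b + 1) ≤ n + 1) :
    (sytSet (n + 1) (b + 1)).filter (n + 1 ∈ ·) = (sytSet n b).image (insert (n + 1)) := by
  ext S
  simp only [mem_filter, mem_image]
  constructor
  · rintro ⟨hS, hmem⟩
    refine ⟨S.erase (n + 1), ?_, insert_erase hmem⟩
    rw [← insert_mem_sytSet_succ_iff (notMem_erase _ _) hb, insert_erase hmem]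
    exact hS
  · rintro ⟨T, hT, rfl⟩
    exact ⟨(insert_mem_sytSet_succ_iff (succ_notMem_of_mem_sytSet hT) hb).2 hT,
      mem_insert_self _ _⟩

lemma card_sytSet_succ_succ {n b : ℕ} (hb : 2 * (b + 1) ≤ n + 1) :
    #(sytSet (n + 1) (b + 1)) = #(sytSet n (b + 1)) + #(sytSet n b) := by
  rw [← card_filter_add_card_filter_not (p := (n + 1 ∉ ·)), filter_notMem_sytSet_succ hb]
  simp only [not_not]
  rw [filter_mem_sytSet_succ hb, card_image_of_injOn]
  intro S hS T hT hST
  rw [← erase_insert (succ_notMem_of_mem_sytSet hS),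
    ← erase_insert (succ_notMem_of_mem_sytSet hT)]
  exact congrArg (·.erase (n + 1)) hST

lemma card_sytSet_add_choose {n k : ℕ} (h : 2 * (k + 1) ≤ n) :
    #(sytSet n (k + 1)) + n.choose k = n.choose (k + 1) := by
  induction n generalizing k with
  | zero => omega
  | succ n ih =>
    rw [card_sytSet_succ_succ h]
    rcases k with _ | k
    · obtain hn | rfl : 2 ≤ n ∨ n = 1 := by omega
      · have := ih (k := 0) hn
        simp only [zero_add, sytSet_zero_right, card_singleton, Nat.choose_zero_right,
          Nat.choose_one_right] at this ⊢
        omega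
      · simp [sytSet_eq_empty_of_lt, sytSet_zero_right]
    · have ih_prev := ih (k := k) (by omega)
      rw [Nat.choose_succ_succ' n (k + 1), Nat.choose_succ_succ' n k]
      obtain hn | rfl : 2 * (k + 2) ≤ n ∨ n = 2 * k + 3 := by omega
      · have := ih (k := k + 1) hn
        omega
      · have hsymm : (2 * k + 3).choose (k + 1 + 1) = (2 * k + 3).choose (k + 1) :=
          Nat.choose_symm_of_eq_add (by omega)
        rw [sytSet_eq_empty_of_lt (by omega), card_empty]
        omega

/-- The hook-length count for two-rowed shapes: the number of standard Young tableaux of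
shape `(n-k, k)` equals `C(n,k)·(n-2k+1)/(n-k+1)` (stated multiplied through by
`n-k+1` to stay in the natural numbers). -/
theorem card_sytSet_two_rows (n k : ℕ) (h : 2 * k ≤ n) :
    (sytSet n k).card * (n - k + 1) = Nat.choose n k * (n - 2 * k + 1) := by
  rcases k with _ | k
  · simp [sytSet_zero_right]
  have hcount := card_sytSet_add_choose h
  have hpascal := Nat.choose_succ_right_eq n k
  zify [show k + 1 ≤ n by omega, show 2 * (k + 1) ≤ n by omega, show k ≤ n by omega] at *
  linear_combination (↑n - ↑k : ℤ) * hcount + hpascal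
end

section
/- For each n and i, the polynomial A_{n,i}(q) = Σ q^{maj(σ)} over 321-avoiding permutations σ of length n with exactly i descents is symmetric: A_{n,i}(q) = q^{ni} A_{n,i}(1/q). -/
open Finset Polynomial
open scoped Classical

/-- The descent set of a permutation `σ` of `{1,…,n}` (as a permutation of `Fin n`,
written in one-line notation with 1-based positions): those positions `i ∈ {1,…,n-1}`
with `σ(i) > σ(i+1)`. -/
noncomputable def permDes (n : ℕ) (σ : Equiv.Perm (Fin n)) : Finset ℕ :=
  (Finset.Ico 1 n).filter (fun i => ∀ h : i < n, σ ⟨i, h⟩ < σ ⟨i - 1, by omega⟩)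

/-- The major index: the sum of the descent positions. -/
noncomputable def permMaj (n : ℕ) (σ : Equiv.Perm (Fin n)) : ℕ := (permDes n σ).sum id

/-- `σ` avoids the pattern 321. -/
def Avoids321 {n : ℕ} (σ : Equiv.Perm (Fin n)) : Prop :=
  ¬ ∃ i j k : Fin n, i < j ∧ j < k ∧ σ k < σ j ∧ σ j < σ i

/-- `σ` avoids the pattern 132. -/
def Avoids132 {n : ℕ} (σ : Equiv.Perm (Fin n)) : Prop :=
  ¬ ∃ i j k : Fin n, i < j ∧ j < k ∧ σ i < σ k ∧ σ k < σ j

/-- `σ` avoids the pattern 231. -/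
def Avoids231 {n : ℕ} (σ : Equiv.Perm (Fin n)) : Prop :=
  ¬ ∃ i j k : Fin n, i < j ∧ j < k ∧ σ k < σ i ∧ σ i < σ j

/-- `A n i = ∑ q^{maj σ}` over 321-avoiding permutations of length `n` with exactly
`i` descents. -/
noncomputable def A (n i : ℕ) : Polynomial ℚ :=
  (Finset.univ.filter
      (fun σ : Equiv.Perm (Fin n) => Avoids321 σ ∧ (permDes n σ).card = i)).sum
    (fun σ => Polynomial.X ^ permMaj n σ)

/-!
Reverse-complementation `σ ↦ w₀ σ w₀` (with `w₀ : j ↦ n - 1 - j`) is an involution that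
preserves 321-avoidance and sends the descent set `D` of `σ` to `n - D`. It therefore keeps
the number `i` of descents and replaces `maj σ` by `n i - maj σ`, so it matches the terms
of `A n i` of degree `M` with those of degree `n i - M`.
-/

section MirrorSymmetry

variable {R α : Type*} [Semiring R] (s : Finset α) (f : α → ℕ) {N : ℕ}

theorem coeff_sum_X_pow_eq_coeff_sub {g : α → α} (hg : Function.Involutive g)
    (hgs : ∀ a ∈ s, g a ∈ s) (hf : ∀ a ∈ s, f a + f (g a) = N) {M : ℕ} (hM : M ≤ N) :
    (∑ a ∈ s, (X : R[X]) ^ f a).coeff M = (∑ a ∈ s, (X : R[X]) ^ f a).coeff (N - M) := by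
  have hreindex : ∑ a ∈ s, (X : R[X]) ^ f a = ∑ a ∈ s, X ^ f (g a) :=
    Finset.sum_nbij' g g hgs hgs (fun a _ => hg a) (fun a _ => hg a) fun a _ => by rw [hg a]
  conv_rhs => rw [hreindex]
  simp only [finsetSum_coeff, coeff_X_pow]
  refine Finset.sum_congr rfl fun a ha => ?_
  have := hf a ha
  simp only [show N - M = f (g a) ↔ M = f a by omega]

theorem coeff_sum_X_pow_eq_zero_of_lt (hf : ∀ a ∈ s, f a ≤ N) {M : ℕ} (hM : N < M) :
    (∑ a ∈ s, (X : R[X]) ^ f a).coeff M = 0 := by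
  simp only [finsetSum_coeff, coeff_X_pow]
  exact Finset.sum_eq_zero fun a ha => if_neg (by have := hf a ha; omega)

end MirrorSymmetry

section ReverseComplement

variable {n : ℕ}

def reverseComplement (σ : Equiv.Perm (Fin n)) : Equiv.Perm (Fin n) :=
  Fin.revPerm * σ * Fin.revPerm

@[simp]
theorem reverseComplement_apply (σ : Equiv.Perm (Fin n)) (j : Fin n) :
    reverseComplement σ j = (σ j.rev).rev := rfl

theorem reverseComplement_involutive :
    Function.Involutive (reverseComplement : Equiv.Perm (Fin n) → Equiv.Perm (Fin n)) :=
  fun σ => Equiv.ext fun j => by simp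

theorem Avoids321.reverseComplement {σ : Equiv.Perm (Fin n)} (h : Avoids321 σ) :
    Avoids321 (reverseComplement σ) := by
  rintro ⟨a, b, c, hab, hbc, hcb, hba⟩
  simp only [reverseComplement_apply, Fin.rev_lt_rev] at hcb hba
  exact h ⟨c.rev, b.rev, a.rev, Fin.rev_lt_rev.mpr hbc, Fin.rev_lt_rev.mpr hab, hba, hcb⟩

theorem mem_permDes_iff {σ : Equiv.Perm (Fin n)} {j : ℕ} :
    j ∈ permDes n σ ↔ ∃ h : 1 ≤ j ∧ j < n, σ ⟨j, h.2⟩ < σ ⟨j - 1, by omega⟩ := by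
  simp only [permDes, mem_filter, mem_Ico]
  exact ⟨fun ⟨hj, hdes⟩ => ⟨hj, hdes hj.2⟩, fun ⟨hj, hdes⟩ => ⟨hj, fun _ => hdes⟩⟩

theorem permDes_subset_Ico (σ : Equiv.Perm (Fin n)) : permDes n σ ⊆ Ico 1 n :=
  filter_subset _ _

theorem sub_mem_permDes_reverseComplement_iff (σ : Equiv.Perm (Fin n)) {j : ℕ}
    (hj : j ∈ Ico 1 n) : n - j ∈ permDes n (reverseComplement σ) ↔ j ∈ permDes n σ := by
  rw [mem_Ico] at hj
  -- reversal turns the pair of positions `(n - j - 1, n - j)` into `(j, j - 1)`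
  have hrev₁ : (⟨n - j, by omega⟩ : Fin n).rev = ⟨j - 1, by omega⟩ := by ext; simp; omega
  have hrev₂ : (⟨n - j - 1, by omega⟩ : Fin n).rev = ⟨j, hj.2⟩ := by ext; simp; omega
  simp only [mem_permDes_iff, reverseComplement_apply, Fin.rev_lt_rev, hrev₁, hrev₂]
  exact ⟨fun ⟨_, hdes⟩ => ⟨hj, hdes⟩, fun ⟨_, hdes⟩ => ⟨by omega, hdes⟩⟩

theorem permDes_reverseComplement (σ : Equiv.Perm (Fin n)) :
    permDes n (reverseComplement σ) = (permDes n σ).image (n - ·) := by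
  ext k
  simp only [mem_image]
  constructor
  · intro hk
    have hk' := mem_Ico.mp (permDes_subset_Ico _ hk)
    have hsub : n - (n - k) = k := by omega
    refine ⟨n - k, (sub_mem_permDes_reverseComplement_iff σ ?_).mp (by rwa [hsub]), hsub⟩
    exact mem_Ico.mpr ⟨by omega, by omega⟩
  · rintro ⟨j, hj, rfl⟩
    exact (sub_mem_permDes_reverseComplement_iff σ (permDes_subset_Ico σ hj)).mpr hj

theorem injOn_sub_permDes (σ : Equiv.Perm (Fin n)) : Set.InjOn (n - ·) (permDes n σ : Set ℕ) :=
  fun a ha b hb hab => by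
    have := mem_Ico.mp (permDes_subset_Ico σ ha)
    have := mem_Ico.mp (permDes_subset_Ico σ hb)
    simp only at hab
    omega

theorem card_permDes_reverseComplement (σ : Equiv.Perm (Fin n)) :
    (permDes n (reverseComplement σ)).card = (permDes n σ).card := by
  rw [permDes_reverseComplement, card_image_of_injOn (injOn_sub_permDes σ)]

theorem permMaj_add_permMaj_reverseComplement (σ : Equiv.Perm (Fin n)) :
    permMaj n σ + permMaj n (reverseComplement σ) = n * (permDes n σ).card := by
  rw [permMaj, permMaj, permDes_reverseComplement, sum_image (injOn_sub_permDes σ),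
    ← sum_add_distrib, mul_comm, ← smul_eq_mul, ← sum_const]
  exact sum_congr rfl fun k hk => by
    have := mem_Ico.mp (permDes_subset_Ico σ hk)
    simp only [id]
    omega

end ReverseComplement

/-- `A_{n,i}(q)` is symmetric: `A_{n,i}(q) = q^{ni} A_{n,i}(1/q)`, i.e. the coefficient
of `q^M` equals the coefficient of `q^{ni-M}` for all `M ≤ ni`, and all coefficients
above degree `ni` vanish. -/
theorem A_symmetric (n i : ℕ) :
    (∀ M : ℕ, M ≤ n * i → (A n i).coeff M = (A n i).coeff (n * i - M)) ∧
      ∀ M : ℕ, n * i < M → (A n i).coeff M = 0 := by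
  set S := univ.filter fun σ : Equiv.Perm (Fin n) => Avoids321 σ ∧ (permDes n σ).card = i
  have hS : ∀ σ ∈ S, reverseComplement σ ∈ S := fun σ hσ => by
    obtain ⟨hσ, hcard⟩ := (mem_filter.mp hσ).2
    exact mem_filter.mpr
      ⟨mem_univ _, hσ.reverseComplement, (card_permDes_reverseComplement σ).trans hcard⟩
  have hmaj : ∀ σ ∈ S, permMaj n σ + permMaj n (reverseComplement σ) = n * i := fun σ hσ => by
    rw [permMaj_add_permMaj_reverseComplement, (mem_filter.mp hσ).2.2]
  exact ⟨fun M => coeff_sum_X_pow_eq_coeff_sub S _ reverseComplement_involutive hS hmaj,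
    fun M => coeff_sum_X_pow_eq_zero_of_lt S _ fun σ hσ => Nat.le.intro (hmaj σ hσ)⟩
end
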